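/- Under the stochastic optimal control setup with weight function w and the Bayesian construction from i.i.d. samples of P^c, for any ε > 0 and δ ∈ (0,1) there exists N(J,ε,δ) > 0 such that for all N ≥ N(J,ε,δ), the probability (over the samples ξ̂_1,…,ξ̂_N) that ‖V̂_N* − V*‖_w < ε is at least 1 − δ, where V̂_N* is the fixed point of the robust Bellman operator with Bayesian ambiguity set 𝔓(P̂_N, r̂_N) and V* is the fixed point of the true Bellman operator under P^c. -/

import Mathlib

/-!
Both value functions are fixed points of Bellman operators that are `γκ`-contractions in the
weighted sup norm, so `‖V̂_N* − V*‖_w ≤ γκ ‖V̂_N* − V*‖_w + K t_N`, where `t_N` bounds the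
`ℓ¹`-distance from `P^c` of every distribution in the ambiguity box and `K` bounds the
integrand under `V*` relative to `w`. Hence `‖V̂_N* − V*‖_w ≤ K t_N / (1 − γκ)`. By the strong law
of large numbers the posterior mode `p̂_N` converges almost surely to `P^c` and the radii `r̂_N`
tend to `0`, so `t_N → 0` almost surely, hence in probability.
-/

open Filter Topology MeasureTheory ProbabilityTheory

noncomputable section

/-- Number of observations among the first `N` samples equal to the `j`-th support point. -/
def sampleCount {Ω : Type*} {J : ℕ} (X : ℕ → Ω → Fin J) (j : Fin J) (N : ℕ) (ω : Ω) : ℕ :=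
  ((Finset.range N).filter (fun i => X i ω = j)).card

/-- Bayesian reference probability `p̂_{j,N} = (τ_{j,0} - 1 + Σ_{i<N} 1{ξ̂_i = ξ^j}) / (Σ_k τ_{k,0} - J + N)`. -/
def bayesCenter {Ω : Type*} {J : ℕ} (τ0 : Fin J → ℝ) (X : ℕ → Ω → Fin J)
    (N : ℕ) (ω : Ω) (j : Fin J) : ℝ :=
  (τ0 j - 1 + (sampleCount X j N ω : ℝ)) / (∑ k, τ0 k - J + N)

/-- Bayesian radius `r̂_{j,N} = z · sqrt( p̂_{j,N}(1 - p̂_{j,N}) / (Σ_k τ_{k,N} - J) )`. -/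
def bayesRadius {Ω : Type*} {J : ℕ} (τ0 : Fin J → ℝ) (z : ℝ) (X : ℕ → Ω → Fin J)
    (N : ℕ) (ω : Ω) (j : Fin J) : ℝ :=
  z * Real.sqrt (bayesCenter τ0 X N ω j * (1 - bayesCenter τ0 X N ω j) / (∑ k, τ0 k - J + N))

/-- Box-type ambiguity set `𝔓(P,r) = {Q ∈ Δ_J : P_j - r_j ≤ Q_j ≤ P_j + r_j ∀ j}`. -/
def boxSet (J : ℕ) (P r : Fin J → ℝ) : Set (Fin J → ℝ) :=
  {Q | Q ∈ stdSimplex ℝ (Fin J) ∧ ∀ j, P j - r j ≤ Q j ∧ Q j ≤ P j + r j}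

/-- Expectation of `h` under the probability vector `Q`. -/
def expec {J : ℕ} (Q h : Fin J → ℝ) : ℝ := ∑ j, Q j * h j

/-- Weighted sup norm `‖V‖_w = sup_{s ∈ S} |V s| / w s`. -/
noncomputable def wSupNorm {m : ℕ} (S : Set (Fin m → ℝ)) (w V : (Fin m → ℝ) → ℝ) : ℝ :=
  ⨆ s : S, |V (s : Fin m → ℝ)| / w (s : Fin m → ℝ)

/-- Distributionally robust Bellman operator. -/
noncomputable def robustBellman {J m n : ℕ} (A : Set (Fin n → ℝ)) (amb : Set (Fin J → ℝ))
    (C : (Fin m → ℝ) → (Fin n → ℝ) → Fin J → ℝ)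
    (g : (Fin m → ℝ) → (Fin n → ℝ) → Fin J → Fin m → ℝ)
    (γ : ℝ) (V : (Fin m → ℝ) → ℝ) (s : Fin m → ℝ) : ℝ :=
  ⨅ a : A, ⨆ Q : amb,
    expec (Q : Fin J → ℝ) (fun j => C s (a : Fin n → ℝ) j + γ * V (g s (a : Fin n → ℝ) j))

/-- True Bellman operator under the distribution `Pc`. -/
noncomputable def trueBellman {J m n : ℕ} (A : Set (Fin n → ℝ)) (Pc : Fin J → ℝ)
    (C : (Fin m → ℝ) → (Fin n → ℝ) → Fin J → ℝ)
    (g : (Fin m → ℝ) → (Fin n → ℝ) → Fin J → Fin m → ℝ)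
    (γ : ℝ) (V : (Fin m → ℝ) → ℝ) (s : Fin m → ℝ) : ℝ :=
  ⨅ a : A, expec Pc (fun j => C s (a : Fin n → ℝ) j + γ * V (g s (a : Fin n → ℝ) j))

/-- Policy-evaluation Bellman operator under the distribution `Pc`. -/
noncomputable def policyBellman {J m n : ℕ} (Pc : Fin J → ℝ)
    (C : (Fin m → ℝ) → (Fin n → ℝ) → Fin J → ℝ)
    (g : (Fin m → ℝ) → (Fin n → ℝ) → Fin J → Fin m → ℝ)
    (π : (Fin m → ℝ) → (Fin n → ℝ))
    (γ : ℝ) (V : (Fin m → ℝ) → ℝ) (s : Fin m → ℝ) : ℝ :=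
  expec Pc (fun j => C s (π s) j + γ * V (g s (π s) j))

section InfSup

variable {ι κ : Type*} [Nonempty ι] [Nonempty κ]

lemma ciSup_le_ciSup_add {F G : ι → ℝ} {c : ℝ} (hG : BddAbove (Set.range G))
    (h : ∀ i, F i ≤ G i + c) : ⨆ i, F i ≤ (⨆ i, G i) + c :=
  ciSup_le fun i => (h i).trans (add_le_add_left (le_ciSup hG i) c)

lemma ciInf_le_ciInf_add {F G : ι → ℝ} {c : ℝ} (hF : BddBelow (Set.range F))
    (h : ∀ i, F i ≤ G i + c) : ⨅ i, F i ≤ (⨅ i, G i) + c := by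
  rw [← sub_le_iff_le_add]
  exact le_ciInf fun i => sub_le_iff_le_add.2 ((ciInf_le hF i).trans (h i))

lemma abs_ciSup_le {f : κ → ℝ} {B : ℝ} (h : ∀ k, |f k| ≤ B) : |⨆ k, f k| ≤ B := by
  have hbdd : BddAbove (Set.range f) := ⟨B, Set.forall_mem_range.2 fun k => (abs_le.1 (h k)).2⟩
  exact abs_le.2 ⟨(abs_le.1 (h (Classical.arbitrary κ))).1.trans (le_ciSup hbdd _),
    ciSup_le fun k => (abs_le.1 (h k)).2⟩

lemma abs_ciInf_ciSup_sub_ciInf_ciSup_le {F G : ι → κ → ℝ} {B B' c : ℝ}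
    (hF : ∀ i k, |F i k| ≤ B) (hG : ∀ i k, |G i k| ≤ B') (h : ∀ i k, |F i k - G i k| ≤ c) :
    |(⨅ i, ⨆ k, F i k) - ⨅ i, ⨆ k, G i k| ≤ c := by
  have bddAbove {H : ι → κ → ℝ} {b : ℝ} (hH : ∀ i k, |H i k| ≤ b) (i : ι) :
      BddAbove (Set.range (H i)) :=
    ⟨b, Set.forall_mem_range.2 fun k => (abs_le.1 (hH i k)).2⟩
  have bddBelow {H : ι → κ → ℝ} {b : ℝ} (hH : ∀ i k, |H i k| ≤ b) :
      BddBelow (Set.range fun i => ⨆ k, H i k) :=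
    ⟨-b, Set.forall_mem_range.2 fun i => (abs_le.1 (abs_ciSup_le (hH i))).1⟩
  refine abs_sub_le_iff.2 ⟨sub_le_iff_le_add'.2 ?_, sub_le_iff_le_add'.2 ?_⟩
  · refine ciInf_le_ciInf_add (bddBelow hF) fun i => ciSup_le_ciSup_add (bddAbove hG i) fun k => ?_
    linarith [(abs_sub_le_iff.1 (h i k)).1]
  · refine ciInf_le_ciInf_add (bddBelow hG) fun i => ciSup_le_ciSup_add (bddAbove hF i) fun k => ?_
    linarith [(abs_sub_le_iff.1 (h i k)).2]

end InfSup

section Expectation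

variable {J : ℕ} {Q P h h' : Fin J → ℝ} {B : ℝ}

lemma abs_expec_le (hQ : Q ∈ stdSimplex ℝ (Fin J)) (hh : ∀ j, |h j| ≤ B) :
    |expec Q h| ≤ B :=
  calc |expec Q h| ≤ ∑ j, |Q j * h j| := Finset.abs_sum_le_sum_abs _ _
    _ ≤ ∑ j, Q j * B := by
        refine Finset.sum_le_sum fun j _ => ?_
        rw [abs_mul, abs_of_nonneg (hQ.1 j)]
        exact mul_le_mul_of_nonneg_left (hh j) (hQ.1 j)
    _ = B := by rw [← Finset.sum_mul, hQ.2, one_mul]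

lemma abs_expec_sub_expec_le (hQ : Q ∈ stdSimplex ℝ (Fin J)) (hh : ∀ j, |h j - h' j| ≤ B) :
    |expec Q h - expec Q h'| ≤ B := by
  have hsub : expec Q h - expec Q h' = expec Q fun j => h j - h' j := by
    simp only [expec, ← Finset.sum_sub_distrib, mul_sub]
  exact hsub ▸ abs_expec_le hQ hh

lemma abs_expec_sub_expec_le_mul_sum (hh : ∀ j, |h j| ≤ B) :
    |expec Q h - expec P h| ≤ B * ∑ j, |Q j - P j| := by
  have hsub : expec Q h - expec P h = ∑ j, (Q j - P j) * h j := by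
    simp only [expec, ← Finset.sum_sub_distrib, sub_mul]
  rw [hsub, Finset.mul_sum]
  refine (Finset.abs_sum_le_sum_abs _ _).trans (Finset.sum_le_sum fun j _ => ?_)
  rw [abs_mul, mul_comm]
  exact mul_le_mul_of_nonneg_right (hh j) (abs_nonneg _)

end Expectation

section WeightedNorm

variable {m : ℕ} {S : Set (Fin m → ℝ)} {w V V' : (Fin m → ℝ) → ℝ}

def IsWBounded (S : Set (Fin m → ℝ)) (w V : (Fin m → ℝ) → ℝ) : Prop :=
  ∃ M, ∀ s ∈ S, |V s| ≤ M * w s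

lemma IsWBounded.sub (hV : IsWBounded S w V) (hV' : IsWBounded S w V') :
    IsWBounded S w fun s => V s - V' s := by
  obtain ⟨M, hM⟩ := hV
  obtain ⟨M', hM'⟩ := hV'
  exact ⟨M + M', fun s hs => (abs_sub _ _).trans (by linarith [hM s hs, hM' s hs])⟩

lemma wSupNorm_nonneg (hw : ∀ s ∈ S, 0 < w s) : 0 ≤ wSupNorm S w V :=
  Real.iSup_nonneg fun s => div_nonneg (abs_nonneg _) (hw s s.2).le

lemma abs_le_wSupNorm_mul (hw : ∀ s ∈ S, 0 < w s) (hV : IsWBounded S w V) {s : Fin m → ℝ}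
    (hs : s ∈ S) : |V s| ≤ wSupNorm S w V * w s := by
  obtain ⟨M, hM⟩ := hV
  have hbdd : BddAbove (Set.range fun s : S => |V s| / w s) :=
    ⟨M, Set.forall_mem_range.2 fun s => (div_le_iff₀ (hw s s.2)).2 (hM s s.2)⟩
  exact (div_le_iff₀ (hw s hs)).1 (le_ciSup hbdd ⟨s, hs⟩)

lemma wSupNorm_le (hS : S.Nonempty) (hw : ∀ s ∈ S, 0 < w s) {c : ℝ}
    (h : ∀ s ∈ S, |V s| ≤ c * w s) : wSupNorm S w V ≤ c :=
  have : Nonempty S := hS.to_subtype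
  ciSup_le fun s => (div_le_iff₀ (hw s s.2)).2 (h s s.2)

end WeightedNorm

section Bellman

variable {J m n : ℕ} {S : Set (Fin m → ℝ)} {A : Set (Fin n → ℝ)}
  {C : (Fin m → ℝ) → (Fin n → ℝ) → Fin J → ℝ} {g : (Fin m → ℝ) → (Fin n → ℝ) → Fin J → Fin m → ℝ}
  {γ κ Cbar : ℝ} {w V V' : (Fin m → ℝ) → ℝ} {s : Fin m → ℝ} {a : Fin n → ℝ}

lemma abs_mul_comp_le (hgS : ∀ s ∈ S, ∀ a ∈ A, ∀ j, g s a j ∈ S) (hγ0 : 0 ≤ γ)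
    (hw : ∀ s ∈ S, 0 < w s) (hdrift : ∀ s ∈ S, ∀ a ∈ A, ∀ j, w (g s a j) ≤ κ * w s)
    (hV : IsWBounded S w V) (hs : s ∈ S) (ha : a ∈ A) (j : Fin J) :
    |γ * V (g s a j)| ≤ γ * κ * wSupNorm S w V * w s := by
  rw [abs_mul, abs_of_nonneg hγ0, mul_assoc γ, mul_assoc γ]
  refine mul_le_mul_of_nonneg_left ?_ hγ0
  calc |V (g s a j)| ≤ wSupNorm S w V * w (g s a j) :=
        abs_le_wSupNorm_mul hw hV (hgS s hs a ha j)
    _ ≤ wSupNorm S w V * (κ * w s) :=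
        mul_le_mul_of_nonneg_left (hdrift s hs a ha j) (wSupNorm_nonneg hw)
    _ = κ * wSupNorm S w V * w s := by ring

lemma abs_bellmanIntegrand_le (hgS : ∀ s ∈ S, ∀ a ∈ A, ∀ j, g s a j ∈ S) (hγ0 : 0 ≤ γ)
    (hw : ∀ s ∈ S, 0 < w s) (hCb : ∀ s ∈ S, ∀ a ∈ A, ∀ j, |C s a j| ≤ Cbar * w s)
    (hdrift : ∀ s ∈ S, ∀ a ∈ A, ∀ j, w (g s a j) ≤ κ * w s)
    (hV : IsWBounded S w V) (hs : s ∈ S) (ha : a ∈ A) (j : Fin J) :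
    |C s a j + γ * V (g s a j)| ≤ (Cbar + γ * κ * wSupNorm S w V) * w s :=
  (abs_add_le _ _).trans
    (by linarith [hCb s hs a ha j, abs_mul_comp_le hgS hγ0 hw hdrift hV hs ha j])

lemma abs_bellmanIntegrand_sub_le (hgS : ∀ s ∈ S, ∀ a ∈ A, ∀ j, g s a j ∈ S) (hγ0 : 0 ≤ γ)
    (hw : ∀ s ∈ S, 0 < w s) (hdrift : ∀ s ∈ S, ∀ a ∈ A, ∀ j, w (g s a j) ≤ κ * w s)
    (hV : IsWBounded S w V) (hV' : IsWBounded S w V') (hs : s ∈ S) (ha : a ∈ A) (j : Fin J) :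
    |(C s a j + γ * V (g s a j)) - (C s a j + γ * V' (g s a j))| ≤
      γ * κ * wSupNorm S w (fun s => V s - V' s) * w s := by
  rw [add_sub_add_left_eq_sub, ← mul_sub]
  exact abs_mul_comp_le hgS hγ0 hw hdrift (hV.sub hV') hs ha j

lemma abs_robustBellman_sub_trueBellman_le (hA : A.Nonempty)
    (hgS : ∀ s ∈ S, ∀ a ∈ A, ∀ j, g s a j ∈ S) (hγ0 : 0 ≤ γ) (hκ0 : 0 ≤ κ) (hCbar : 0 ≤ Cbar)
    (hw : ∀ s ∈ S, 0 < w s) (hCb : ∀ s ∈ S, ∀ a ∈ A, ∀ j, |C s a j| ≤ Cbar * w s)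
    (hdrift : ∀ s ∈ S, ∀ a ∈ A, ∀ j, w (g s a j) ≤ κ * w s)
    {amb : Set (Fin J → ℝ)} (hamb : amb.Nonempty) (hamb_simplex : amb ⊆ stdSimplex ℝ (Fin J))
    {Pc : Fin J → ℝ} (hPc : Pc ∈ stdSimplex ℝ (Fin J))
    {t : ℝ} (ht : ∀ Q ∈ amb, ∑ j, |Q j - Pc j| ≤ t)
    (hV : IsWBounded S w V) (hV' : IsWBounded S w V') (hs : s ∈ S) :
    |robustBellman A amb C g γ V s - trueBellman A Pc C g γ V' s| ≤
      (γ * κ * wSupNorm S w (fun s => V s - V' s) + (Cbar + γ * κ * wSupNorm S w V') * t)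
        * w s := by
  have : Nonempty A := hA.to_subtype
  have : Nonempty amb := hamb.to_subtype
  have hK : 0 ≤ (Cbar + γ * κ * wSupNorm S w V') * w s := by
    have := wSupNorm_nonneg (V := V') hw
    have := hw s hs
    positivity
  -- a constant inner supremum puts both operators in inf-sup form, to be compared termwise
  have htrue : trueBellman A Pc C g γ V' s =
      ⨅ a : A, ⨆ _Q : amb, expec Pc fun j => C s a j + γ * V' (g s a j) := by
    simp only [trueBellman, ciSup_const]
  rw [htrue, robustBellman]
  refine abs_ciInf_ciSup_sub_ciInf_ciSup_le
    (fun a Q => abs_expec_le (hamb_simplex Q.2) fun j =>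
      abs_bellmanIntegrand_le hgS hγ0 hw hCb hdrift hV hs a.2 j)
    (fun a _ => abs_expec_le hPc fun j =>
      abs_bellmanIntegrand_le hgS hγ0 hw hCb hdrift hV' hs a.2 j)
    fun a Q => ?_
  calc _ ≤ |expec Q (fun j => C s a j + γ * V (g s a j)) -
          expec Q (fun j => C s a j + γ * V' (g s a j))| +
        |expec Q (fun j => C s a j + γ * V' (g s a j)) -
          expec Pc (fun j => C s a j + γ * V' (g s a j))| := abs_sub_le _ _ _
    _ ≤ γ * κ * wSupNorm S w (fun s => V s - V' s) * w s +
        (Cbar + γ * κ * wSupNorm S w V') * w s * t :=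
      add_le_add (abs_expec_sub_expec_le (hamb_simplex Q.2) fun j =>
        abs_bellmanIntegrand_sub_le hgS hγ0 hw hdrift hV hV' hs a.2 j)
        ((abs_expec_sub_expec_le_mul_sum fun j =>
          abs_bellmanIntegrand_le hgS hγ0 hw hCb hdrift hV' hs a.2 j).trans
            (mul_le_mul_of_nonneg_left (ht Q Q.2) hK))
    _ = _ := by ring

lemma wSupNorm_sub_le_of_fixedPoints (hS : S.Nonempty) (hA : A.Nonempty)
    (hgS : ∀ s ∈ S, ∀ a ∈ A, ∀ j, g s a j ∈ S) (hγ0 : 0 ≤ γ) (hκ0 : 0 ≤ κ) (hCbar : 0 ≤ Cbar)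
    (hw : ∀ s ∈ S, 0 < w s) (hCb : ∀ s ∈ S, ∀ a ∈ A, ∀ j, |C s a j| ≤ Cbar * w s)
    (hdrift : ∀ s ∈ S, ∀ a ∈ A, ∀ j, w (g s a j) ≤ κ * w s)
    {amb : Set (Fin J → ℝ)} (hamb : amb.Nonempty) (hamb_simplex : amb ⊆ stdSimplex ℝ (Fin J))
    {Pc : Fin J → ℝ} (hPc : Pc ∈ stdSimplex ℝ (Fin J))
    {t : ℝ} (ht : ∀ Q ∈ amb, ∑ j, |Q j - Pc j| ≤ t)
    (hV : IsWBounded S w V) (hVfix : ∀ s ∈ S, V s = robustBellman A amb C g γ V s)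
    (hV' : IsWBounded S w V') (hV'fix : ∀ s ∈ S, V' s = trueBellman A Pc C g γ V' s) :
    wSupNorm S w (fun s => V s - V' s) ≤
      γ * κ * wSupNorm S w (fun s => V s - V' s) + (Cbar + γ * κ * wSupNorm S w V') * t :=
  wSupNorm_le hS hw fun s hs => by
    rw [hVfix s hs, hV'fix s hs]
    exact abs_robustBellman_sub_trueBellman_le hA hgS hγ0 hκ0 hCbar hw hCb hdrift hamb hamb_simplex
      hPc ht hV hV' hs

end Bellman

section BoxSet

variable {J : ℕ} {P r Q : Fin J → ℝ}

lemma mem_boxSet_self (hP : P ∈ stdSimplex ℝ (Fin J)) (hr : ∀ j, 0 ≤ r j) : P ∈ boxSet J P r :=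
  ⟨hP, fun j => ⟨by linarith [hr j], by linarith [hr j]⟩⟩

lemma sum_abs_sub_le_of_mem_boxSet (hQ : Q ∈ boxSet J P r) (Pc : Fin J → ℝ) :
    ∑ j, |Q j - Pc j| ≤ ∑ j, (|P j - Pc j| + r j) :=
  Finset.sum_le_sum fun j _ => by
    have hQP : |Q j - P j| ≤ r j := abs_le.2 ⟨by linarith [(hQ.2 j).1], by linarith [(hQ.2 j).2]⟩
    linarith [abs_sub_le (Q j) (P j) (Pc j)]

end BoxSet

section Bayes

variable {Ω : Type*} {J : ℕ} (τ0 : Fin J → ℝ) (z : ℝ) {X : ℕ → Ω → Fin J}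

lemma sampleCount_eq_sum_ite (X : ℕ → Ω → Fin J) (j : Fin J) (N : ℕ) (ω : Ω) :
    (sampleCount X j N ω : ℝ) = ∑ i ∈ Finset.range N, if X i ω = j then 1 else 0 := by
  rw [sampleCount, Finset.card_filter]
  push_cast
  rfl

lemma sum_sampleCount (X : ℕ → Ω → Fin J) (N : ℕ) (ω : Ω) : ∑ j, sampleCount X j N ω = N := by
  classical
  simpa [sampleCount] using (Finset.card_eq_sum_card_fiberwise (f := fun i => X i ω)
    (s := Finset.range N) (t := Finset.univ) fun i _ => Finset.mem_univ _).symm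

lemma bayesDenominator_pos (hJ : 0 < J) {τ0 : Fin J → ℝ} (hτ0 : ∀ j, 1 < τ0 j) (N : ℕ) :
    0 < ∑ k, τ0 k - J + N := by
  have : Nonempty (Fin J) := Fin.pos_iff_nonempty.1 hJ
  have hsum : (J : ℝ) < ∑ k, τ0 k := by
    simpa using Finset.sum_lt_sum_of_nonempty Finset.univ_nonempty fun k _ => hτ0 k
  linarith [(N.cast_nonneg : (0 : ℝ) ≤ N)]

lemma bayesCenter_mem_stdSimplex (hJ : 0 < J) {τ0 : Fin J → ℝ} (hτ0 : ∀ j, 1 < τ0 j)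
    (X : ℕ → Ω → Fin J) (N : ℕ) (ω : Ω) : bayesCenter τ0 X N ω ∈ stdSimplex ℝ (Fin J) := by
  have hden := bayesDenominator_pos hJ hτ0 N
  refine ⟨fun j => div_nonneg ?_ hden.le, ?_⟩
  · linarith [hτ0 j, (Nat.cast_nonneg _ : (0 : ℝ) ≤ sampleCount X j N ω)]
  · simp only [bayesCenter]
    rw [← Finset.sum_div, div_eq_one_iff_eq hden.ne', Finset.sum_add_distrib,
      ← Nat.cast_sum, sum_sampleCount, Finset.sum_sub_distrib]
    simp

lemma bayesRadius_nonneg {z : ℝ} (hz : 0 ≤ z) (X : ℕ → Ω → Fin J) (N : ℕ) (ω : Ω) (j : Fin J) :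
    0 ≤ bayesRadius τ0 z X N ω j :=
  mul_nonneg hz (Real.sqrt_nonneg _)

lemma tendsto_add_div_add {c : ℕ → ℝ} {p : ℝ}
    (hc : Tendsto (fun N : ℕ => c N / N) atTop (𝓝 p)) (a b : ℝ) :
    Tendsto (fun N : ℕ => (a + c N) / (b + N)) atTop (𝓝 p) := by
  have hlim : Tendsto (fun N : ℕ => (a / N + c N / N) / (b / N + 1)) atTop
      (𝓝 ((0 + p) / (0 + 1))) :=
    ((tendsto_const_div_atTop_nhds_zero_nat a).add hc).div
      ((tendsto_const_div_atTop_nhds_zero_nat b).add tendsto_const_nhds) (by norm_num)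
  rw [zero_add, zero_add, div_one] at hlim
  refine hlim.congr' ?_
  filter_upwards [eventually_ge_atTop 1] with N hN
  have : (N : ℝ) ≠ 0 := Nat.cast_ne_zero.2 (by omega)
  field_simp

lemma tendsto_bayesCenter {ω : Ω} {j : Fin J} {p : ℝ}
    (hc : Tendsto (fun N : ℕ => (sampleCount X j N ω : ℝ) / N) atTop (𝓝 p)) :
    Tendsto (fun N => bayesCenter τ0 X N ω j) atTop (𝓝 p) :=
  tendsto_add_div_add hc _ _

lemma tendsto_bayesRadius_zero {ω : Ω} {j : Fin J} {p : ℝ}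
    (hc : Tendsto (fun N => bayesCenter τ0 X N ω j) atTop (𝓝 p)) :
    Tendsto (fun N => bayesRadius τ0 z X N ω j) atTop (𝓝 0) := by
  have hvar : Tendsto (fun N : ℕ => bayesCenter τ0 X N ω j * (1 - bayesCenter τ0 X N ω j) /
      (∑ k, τ0 k - J + N)) atTop (𝓝 0) := by
    simpa using (hc.mul (tendsto_const_nhds.sub hc)).div_atTop
      (tendsto_atTop_add_const_left _ _ tendsto_natCast_atTop_atTop)
  simpa [bayesRadius] using ((Real.continuous_sqrt.tendsto 0).comp hvar).const_mul z

def bayesDeviation (Pc : Fin J → ℝ) (X : ℕ → Ω → Fin J) (N : ℕ) (ω : Ω) : ℝ :=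
  ∑ j, (|bayesCenter τ0 X N ω j - Pc j| + bayesRadius τ0 z X N ω j)

lemma tendsto_bayesDeviation_zero {Pc : Fin J → ℝ} {ω : Ω}
    (hc : ∀ j, Tendsto (fun N : ℕ => (sampleCount X j N ω : ℝ) / N) atTop (𝓝 (Pc j))) :
    Tendsto (fun N => bayesDeviation τ0 z Pc X N ω) atTop (𝓝 0) := by
  have hlim := tendsto_finsetSum Finset.univ fun j _ =>
    ((tendsto_bayesCenter τ0 (hc j)).sub_const (Pc j)).abs.add
      (tendsto_bayesRadius_zero τ0 z (tendsto_bayesCenter τ0 (hc j)))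
  simpa [bayesDeviation] using hlim

variable [MeasurableSpace Ω]

lemma measurable_sampleCount (hX : ∀ i, Measurable (X i)) (j : Fin J) (N : ℕ) :
    Measurable fun ω => (sampleCount X j N ω : ℝ) := by
  simp_rw [sampleCount_eq_sum_ite]
  exact Finset.measurable_sum _ fun i _ =>
    Measurable.ite (hX i (measurableSet_singleton j)) measurable_const measurable_const

lemma measurable_bayesDeviation (hX : ∀ i, Measurable (X i)) (Pc : Fin J → ℝ) (N : ℕ) :
    Measurable (bayesDeviation τ0 z Pc X N) := by
  have hcenter (j : Fin J) : Measurable fun ω => bayesCenter τ0 X N ω j :=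
    (measurable_const.add (measurable_sampleCount hX j N)).div_const _
  refine Finset.measurable_sum _ fun j _ => ((hcenter j).sub_const _).abs.add ?_
  exact (Real.continuous_sqrt.measurable.comp
    (((hcenter j).mul (measurable_const.sub (hcenter j))).div_const _)).const_mul z

end Bayes

section Probability

variable {Ω : Type*} [MeasurableSpace Ω] {μ : Measure Ω}

lemma identDistrib_of_measure_fiber_eq {E : Type*} [MeasurableSpace E]
    [MeasurableSingletonClass E] [Countable E] {Y Y' : Ω → E} (hY : Measurable Y)
    (hY' : Measurable Y') (h : ∀ e, μ {ω | Y ω = e} = μ {ω | Y' ω = e}) :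
    IdentDistrib Y Y' μ μ :=
  ⟨hY.aemeasurable, hY'.aemeasurable, Measure.ext_iff_singleton.2 fun e => by
    rw [Measure.map_apply hY (measurableSet_singleton e),
      Measure.map_apply hY' (measurableSet_singleton e)]
    exact h e⟩

lemma ae_tendsto_sampleCount_div [IsProbabilityMeasure μ] {J : ℕ} {X : ℕ → Ω → Fin J}
    (hX : ∀ i, Measurable (X i)) (hindep : iIndepFun X μ) {Pc : Fin J → ℝ}
    (hPc : ∀ j, 0 ≤ Pc j) (hident : ∀ i j, μ {ω | X i ω = j} = ENNReal.ofReal (Pc j)) :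
    ∀ᵐ ω ∂μ, ∀ j, Tendsto (fun N : ℕ => (sampleCount X j N ω : ℝ) / N) atTop (𝓝 (Pc j)) := by
  refine ae_all_iff.2 fun j => ?_
  let φ : Fin J → ℝ := fun x => if x = j then 1 else 0
  have hφ : Measurable φ := measurable_of_finite φ
  have hfiber : MeasurableSet {ω | X 0 ω = j} := hX 0 (measurableSet_singleton j)
  have hind : φ ∘ X 0 = {ω | X 0 ω = j}.indicator 1 := by
    ext ω
    simp [φ, Set.indicator_apply]
  have hint : Integrable (φ ∘ X 0) μ := hind ▸ (integrable_const 1).indicator hfiber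
  have hmean : μ[φ ∘ X 0] = Pc j := by
    rw [hind, integral_indicator_one hfiber, measureReal_def, hident, ENNReal.toReal_ofReal (hPc j)]
  have hlaw := strong_law_ae_real (fun i => φ ∘ X i) hint
    (fun i k hik => (hindep.indepFun hik).comp hφ hφ)
    (fun i => (identDistrib_of_measure_fiber_eq (hX i) (hX 0) fun e => by
      rw [hident, hident]).comp hφ)
  rw [hmean] at hlaw
  filter_upwards [hlaw] with ω hω
  simpa [sampleCount_eq_sum_ite, φ] using hω

lemma eventually_ofReal_one_sub_le_measure_lt [IsProbabilityMeasure μ] {f : ℕ → Ω → ℝ}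
    (hf : ∀ N, AEStronglyMeasurable (f N) μ)
    (hlim : ∀ᵐ ω ∂μ, Tendsto (fun N => f N ω) atTop (𝓝 0)) {c δ : ℝ} (hc : 0 < c)
    (hδ : 0 < δ) : ∀ᶠ N in atTop, ENNReal.ofReal (1 - δ) ≤ μ {ω | f N ω < c} := by
  have hbad := tendstoInMeasure_iff_dist.1 (tendstoInMeasure_of_tendsto_ae hf hlim) c hc
  filter_upwards [hbad.eventually_lt_const (ENNReal.ofReal_pos.2 hδ)] with N hN
  have hcover : Set.univ ⊆ {ω | f N ω < c} ∪ {ω | c ≤ dist (f N ω) 0} := fun ω _ => by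
    by_cases h : f N ω < c
    · exact Or.inl h
    · exact Or.inr ((not_lt.1 h).trans ((le_abs_self _).trans_eq (Real.dist_0_eq_abs _).symm))
  calc ENNReal.ofReal (1 - δ) = 1 - ENNReal.ofReal δ := by
        rw [ENNReal.ofReal_sub 1 hδ.le, ENNReal.ofReal_one]
    _ ≤ 1 - μ {ω | c ≤ dist (f N ω) 0} := tsub_le_tsub_left hN.le 1
    _ ≤ μ {ω | f N ω < c} := tsub_le_iff_right.2 <| by
        rw [← measure_univ (μ := μ)]
        exact (measure_mono hcover).trans (measure_union_le _ _)

end Probability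

theorem episodic_value_finite_sample_general
    {Ω : Type*} [MeasurableSpace Ω] (μ : Measure Ω) [IsProbabilityMeasure μ]
    (J m n : ℕ) (hJ : 2 ≤ J)
    (S : Set (Fin m → ℝ)) (hS : S.Nonempty)
    (A : Set (Fin n → ℝ)) (hA : A.Nonempty)
    (C : (Fin m → ℝ) → (Fin n → ℝ) → Fin J → ℝ)
    (g : (Fin m → ℝ) → (Fin n → ℝ) → Fin J → Fin m → ℝ)
    (hgS : ∀ s ∈ S, ∀ a ∈ A, ∀ j, g s a j ∈ S)
    (γ : ℝ) (hγ0 : 0 ≤ γ)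
    (w : (Fin m → ℝ) → ℝ) (hw1 : ∀ s ∈ S, 1 ≤ w s)
    (Cbar κ : ℝ) (hCbar0 : 0 < Cbar) (hκ0 : 0 ≤ κ)
    (hCb : ∀ s ∈ S, ∀ a ∈ A, ∀ j, |C s a j| ≤ Cbar * w s)
    (hdrift : ∀ s ∈ S, ∀ a ∈ A, ∀ j, w (g s a j) ≤ κ * w s)
    (hγκ : γ * κ < 1)
    (Pc : Fin J → ℝ) (hPc : Pc ∈ stdSimplex ℝ (Fin J))
    (X : ℕ → Ω → Fin J) (hmeas : ∀ i, Measurable (X i))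
    (hindep : iIndepFun X μ)
    (hident : ∀ i j, μ {ω | X i ω = j} = ENNReal.ofReal (Pc j))
    (τ0 : Fin J → ℝ) (hτ0 : ∀ j, 1 < τ0 j)
    (z : ℝ) (hz : 0 < z)
    (Vstar : (Fin m → ℝ) → ℝ) (hVstarBd : ∃ M, ∀ s ∈ S, |Vstar s| ≤ M * w s)
    (hVstarFix : ∀ s ∈ S, Vstar s = trueBellman A Pc C g γ Vstar s)
    (Vhat : ℕ → Ω → (Fin m → ℝ) → ℝ)
    (hVhatBd : ∀ N ω, ∃ M, ∀ s ∈ S, |Vhat N ω s| ≤ M * w s)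
    (hVhatFix : ∀ N ω, ∀ s ∈ S,
      Vhat N ω s =
        robustBellman A (boxSet J (bayesCenter τ0 X N ω) (bayesRadius τ0 z X N ω))
          C g γ (Vhat N ω) s)
    (ε δ : ℝ) (hε : 0 < ε) (hδ0 : 0 < δ) :
    ∃ N0 : ℕ, ∀ N ≥ N0,
      ENNReal.ofReal (1 - δ) ≤
        μ {ω | wSupNorm S w (fun s => Vhat N ω s - Vstar s) < ε} := by
  have hw : ∀ s ∈ S, 0 < w s := fun s hs => one_pos.trans_le (hw1 s hs)
  have hgap : 0 < 1 - γ * κ := by linarith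
  set K := Cbar + γ * κ * wSupNorm S w Vstar
  obtain ⟨N0, hN0⟩ := eventually_atTop.1 <| eventually_ofReal_one_sub_le_measure_lt
    (fun N => ((measurable_bayesDeviation τ0 z hmeas Pc N).const_mul K).aestronglyMeasurable)
    ((ae_tendsto_sampleCount_div hmeas hindep hPc.1 hident).mono fun ω hω => by
      simpa using (tendsto_bayesDeviation_zero τ0 z hω).const_mul K)
    (mul_pos hε hgap) hδ0
  refine ⟨N0, fun N hN => (hN0 N hN).trans (measure_mono fun ω hω => ?_)⟩
  have hP := bayesCenter_mem_stdSimplex (by omega) hτ0 X N ω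
  have hcontract := wSupNorm_sub_le_of_fixedPoints hS hA hgS hγ0 hκ0 hCbar0.le hw hCb hdrift
    ⟨_, mem_boxSet_self hP (bayesRadius_nonneg τ0 hz.le X N ω)⟩ (fun Q hQ => hQ.1) hPc
    (fun Q hQ => sum_abs_sub_le_of_mem_boxSet hQ Pc) (hVhatBd N ω) (hVhatFix N ω)
    hVstarBd hVstarFix
  simp only [Set.mem_ofPred_eq, bayesDeviation] at hω
  have : (1 - γ * κ) * wSupNorm S w (fun s => Vhat N ω s - Vstar s) < (1 - γ * κ) * ε := by
    linarith
  exact lt_of_mul_lt_mul_left this hgap.le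

/-- finite-sample probability guarantee for the episodic Bayesian DROC
optimal value function. -/
theorem episodic_value_finite_sample
    {Ω : Type*} [MeasurableSpace Ω] (μ : Measure Ω) [IsProbabilityMeasure μ]
    (J m n : ℕ) (hJ : 2 ≤ J)
    (S : Set (Fin m → ℝ)) (hS : S.Nonempty) (hScl : IsClosed S)
    (A : Set (Fin n → ℝ)) (hA : A.Nonempty) (hAcp : IsCompact A)
    (C : (Fin m → ℝ) → (Fin n → ℝ) → Fin J → ℝ)
    (g : (Fin m → ℝ) → (Fin n → ℝ) → Fin J → Fin m → ℝ)
    (hCcont : ∀ j, ContinuousOn (fun p : (Fin m → ℝ) × (Fin n → ℝ) => C p.1 p.2 j) (S ×ˢ A))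
    (hgcont : ∀ j, ContinuousOn (fun p : (Fin m → ℝ) × (Fin n → ℝ) => g p.1 p.2 j) (S ×ˢ A))
    (hgS : ∀ s ∈ S, ∀ a ∈ A, ∀ j, g s a j ∈ S)
    (γ : ℝ) (hγ0 : 0 ≤ γ) (hγ1 : γ < 1)
    (w : (Fin m → ℝ) → ℝ) (hw1 : ∀ s ∈ S, 1 ≤ w s) (hwcont : ContinuousOn w S)
    (Cbar κ : ℝ) (hCbar0 : 0 < Cbar) (hκ0 : 0 ≤ κ)
    (hCb : ∀ s ∈ S, ∀ a ∈ A, ∀ j, |C s a j| ≤ Cbar * w s)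
    (hdrift : ∀ s ∈ S, ∀ a ∈ A, ∀ j, w (g s a j) ≤ κ * w s)
    (hγκ : γ * κ < 1)
    (Pc : Fin J → ℝ) (hPc : Pc ∈ stdSimplex ℝ (Fin J))
    (X : ℕ → Ω → Fin J) (hmeas : ∀ i, Measurable (X i))
    (hindep : iIndepFun X μ)
    (hident : ∀ i j, μ {ω | X i ω = j} = ENNReal.ofReal (Pc j))
    (τ0 : Fin J → ℝ) (hτ0 : ∀ j, 1 < τ0 j)
    (z : ℝ) (hz : 0 < z)
    (Vstar : (Fin m → ℝ) → ℝ) (hVstarBd : ∃ M, ∀ s ∈ S, |Vstar s| ≤ M * w s)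
    (hVstarFix : ∀ s ∈ S, Vstar s = trueBellman A Pc C g γ Vstar s)
    (Vhat : ℕ → Ω → (Fin m → ℝ) → ℝ)
    (hVhatBd : ∀ N ω, ∃ M, ∀ s ∈ S, |Vhat N ω s| ≤ M * w s)
    (hVhatFix : ∀ N ω, ∀ s ∈ S,
      Vhat N ω s =
        robustBellman A (boxSet J (bayesCenter τ0 X N ω) (bayesRadius τ0 z X N ω))
          C g γ (Vhat N ω) s)
    (ε δ : ℝ) (hε : 0 < ε) (hδ0 : 0 < δ) (hδ1 : δ < 1) :
    ∃ N0 : ℕ, ∀ N ≥ N0,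
      ENNReal.ofReal (1 - δ) ≤
        μ {ω | wSupNorm S w (fun s => Vhat N ω s - Vstar s) < ε} :=
  episodic_value_finite_sample_general μ J m n hJ S hS A hA C g hgS γ hγ0 w hw1 Cbar κ hCbar0 hκ0
    hCb hdrift hγκ Pc hPc X hmeas hindep hident τ0 hτ0 z hz Vstar hVstarBd hVstarFix Vhat hVhatBd
    hVhatFix ε δ hε hδ0

end
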